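/- arXiv:2301.13701 — 5 statements merged into one kernel-verified Lean document; each statement's English description precedes it below -/
import Mathlib

section
/- For 1 < β ≤ 2, the β-divergence D_B^{(β)}(g‖f) is convex in its second argument: for probability densities g, f₁, f₂ with finite β-divergences D_B^{(β)}(g‖f₁) and D_B^{(β)}(g‖f₂), and λ ∈ [0,1], D_B^{(β)}(g ‖ λf₁ + (1−λ)f₂) ≤ λ D_B^{(β)}(g‖f₁) + (1−λ) D_B^{(β)}(g‖f₂). -/
open MeasureTheory

/-- The β-divergence between densities `g` and `f` w.r.t. `μ`. -/
noncomputable def betaD {α : Type*} [MeasurableSpace α] (μ : Measure α)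
    (β : ℝ) (g f : α → ℝ) : ℝ :=
  ∫ y, (g y ^ β / (β * (β - 1)) + f y ^ β / β - g y * f y ^ (β - 1) / (β - 1)) ∂μ

/-- Pointwise convexity of the β-divergence integrand in its second argument. -/
lemma betaD_integrand_convex {β lam c a b : ℝ} (hβ1 : 1 < β) (hβ2 : β ≤ 2)
    (hl0 : 0 ≤ lam) (hl1 : lam ≤ 1) (hc : 0 ≤ c) (ha : 0 ≤ a) (hb : 0 ≤ b) :
    c ^ β / (β * (β - 1)) + (lam * a + (1 - lam) * b) ^ β / β
      - c * (lam * a + (1 - lam) * b) ^ (β - 1) / (β - 1)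
    ≤ lam * (c ^ β / (β * (β - 1)) + a ^ β / β - c * a ^ (β - 1) / (β - 1))
      + (1 - lam) * (c ^ β / (β * (β - 1)) + b ^ β / β - c * b ^ (β - 1) / (β - 1)) := by
  have hβ0 : (0:ℝ) < β := by linarith
  have hβ1' : (0:ℝ) < β - 1 := by linarith
  have hl1' : (0:ℝ) ≤ 1 - lam := by linarith
  have hmem_a : a ∈ Set.Ici (0:ℝ) := ha
  have hmem_b : b ∈ Set.Ici (0:ℝ) := hb
  have h1 : (lam * a + (1 - lam) * b) ^ β ≤ lam * a ^ β + (1 - lam) * b ^ β := by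
    have := (convexOn_rpow (le_of_lt hβ1)).2 hmem_a hmem_b hl0 hl1' (by ring)
    simpa [smul_eq_mul] using this
  have h2 : lam * a ^ (β - 1) + (1 - lam) * b ^ (β - 1)
      ≤ (lam * a + (1 - lam) * b) ^ (β - 1) := by
    have := (Real.concaveOn_rpow (le_of_lt hβ1') (by linarith)).2 hmem_a hmem_b hl0 hl1'
      (by ring)
    simpa [smul_eq_mul] using this
  have key1 : (lam * a + (1 - lam) * b) ^ β / β
      ≤ (lam * a ^ β + (1 - lam) * b ^ β) / β := by gcongr
  have key2 : c * (lam * a ^ (β - 1) + (1 - lam) * b ^ (β - 1)) / (β - 1)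
      ≤ c * (lam * a + (1 - lam) * b) ^ (β - 1) / (β - 1) := by gcongr
  calc c ^ β / (β * (β - 1)) + (lam * a + (1 - lam) * b) ^ β / β
        - c * (lam * a + (1 - lam) * b) ^ (β - 1) / (β - 1)
      ≤ c ^ β / (β * (β - 1)) + (lam * a ^ β + (1 - lam) * b ^ β) / β
        - c * (lam * a ^ (β - 1) + (1 - lam) * b ^ (β - 1)) / (β - 1) := by
        linarith [key1, key2]
    _ = lam * (c ^ β / (β * (β - 1)) + a ^ β / β - c * a ^ (β - 1) / (β - 1))
        + (1 - lam) * (c ^ β / (β * (β - 1)) + b ^ β / β - c * b ^ (β - 1) / (β - 1)) := by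
        ring

/-- Nonnegativity of the β-divergence integrand (Young's inequality / Bregman form). -/
lemma betaD_integrand_nonneg {β c m : ℝ} (hβ1 : 1 < β) (hc : 0 ≤ c) (hm : 0 ≤ m) :
    0 ≤ c ^ β / (β * (β - 1)) + m ^ β / β - c * m ^ (β - 1) / (β - 1) := by
  have hβ0 : (0:ℝ) < β := by linarith
  have hβ1' : (0:ℝ) < β - 1 := by linarith
  have hpq : β.HolderConjugate (β / (β - 1)) := Real.HolderConjugate.conjExponent hβ1
  have hyoung := Real.young_inequality_of_nonneg hc (Real.rpow_nonneg hm (β - 1)) hpq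
  have hrw : (m ^ (β - 1)) ^ (β / (β - 1)) = m ^ β := by
    rw [← Real.rpow_mul hm]
    congr 1
    field_simp
  rw [hrw] at hyoung
  -- hyoung : c * m ^ (β - 1) ≤ c ^ β / β + m ^ β / (β / (β - 1))
  have h2 : m ^ β / (β / (β - 1)) = m ^ β * (β - 1) / β := by
    field_simp
  rw [h2] at hyoung
  have hdiv : c * m ^ (β - 1) / (β - 1) ≤ (c ^ β / β + m ^ β * (β - 1) / β) / (β - 1) := by
    gcongr
  have heq : (c ^ β / β + m ^ β * (β - 1) / β) / (β - 1)
      = c ^ β / (β * (β - 1)) + m ^ β / β := by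
    field_simp
  linarith [heq ▸ hdiv]

/-- convexity of the β-divergence in its second argument for `1 < β ≤ 2`. -/
theorem betaD_convex_second {α : Type*} [MeasurableSpace α] (μ : Measure α)
    (g f₁ f₂ : α → ℝ) (β lam : ℝ) (hβ1 : 1 < β) (hβ2 : β ≤ 2)
    (hlam0 : 0 ≤ lam) (hlam1 : lam ≤ 1)
    (hg_meas : Measurable g) (hf₁_meas : Measurable f₁) (hf₂_meas : Measurable f₂)
    (hg_nonneg : ∀ y, 0 ≤ g y) (hf₁_nonneg : ∀ y, 0 ≤ f₁ y) (hf₂_nonneg : ∀ y, 0 ≤ f₂ y)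
    (hg_one : ∫ y, g y ∂μ = 1) (hf₁_one : ∫ y, f₁ y ∂μ = 1) (hf₂_one : ∫ y, f₂ y ∂μ = 1)
    (hint₁ : Integrable (fun y =>
      g y ^ β / (β * (β - 1)) + f₁ y ^ β / β - g y * f₁ y ^ (β - 1) / (β - 1)) μ)
    (hint₂ : Integrable (fun y =>
      g y ^ β / (β * (β - 1)) + f₂ y ^ β / β - g y * f₂ y ^ (β - 1) / (β - 1)) μ) :
    betaD μ β g (fun y => lam * f₁ y + (1 - lam) * f₂ y) ≤
      lam * betaD μ β g f₁ + (1 - lam) * betaD μ β g f₂ := by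
  set m : α → ℝ := fun y => lam * f₁ y + (1 - lam) * f₂ y with hm_def
  set φ : α → ℝ := fun y =>
    g y ^ β / (β * (β - 1)) + m y ^ β / β - g y * m y ^ (β - 1) / (β - 1) with hφ_def
  set ψ : α → ℝ := fun y =>
    lam * (g y ^ β / (β * (β - 1)) + f₁ y ^ β / β - g y * f₁ y ^ (β - 1) / (β - 1))
    + (1 - lam) * (g y ^ β / (β * (β - 1)) + f₂ y ^ β / β - g y * f₂ y ^ (β - 1) / (β - 1))
    with hψ_def
  have hm_nonneg : ∀ y, 0 ≤ m y := fun y =>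
    add_nonneg (mul_nonneg hlam0 (hf₁_nonneg y))
      (mul_nonneg (by linarith) (hf₂_nonneg y))
  have hptw : ∀ y, φ y ≤ ψ y := fun y =>
    betaD_integrand_convex hβ1 hβ2 hlam0 hlam1 (hg_nonneg y) (hf₁_nonneg y) (hf₂_nonneg y)
  have hnn : ∀ y, 0 ≤ φ y := fun y =>
    betaD_integrand_nonneg hβ1 (hg_nonneg y) (hm_nonneg y)
  have hψ_int : Integrable ψ μ := (hint₁.const_mul lam).add (hint₂.const_mul (1 - lam))
  have hm_meas : Measurable m := (hf₁_meas.const_mul lam).add (hf₂_meas.const_mul (1 - lam))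
  have hφ_meas : Measurable φ := by
    rw [hφ_def]; fun_prop
  have hφ_int : Integrable φ μ := by
    refine hψ_int.mono hφ_meas.aestronglyMeasurable (Filter.Eventually.of_forall fun y => ?_)
    rw [Real.norm_eq_abs, Real.norm_eq_abs, abs_of_nonneg (hnn y)]
    exact (hptw y).trans (le_abs_self _)
  have hmono : ∫ y, φ y ∂μ ≤ ∫ y, ψ y ∂μ := integral_mono hφ_int hψ_int hptw
  have hψ_integral : ∫ y, ψ y ∂μ
      = lam * betaD μ β g f₁ + (1 - lam) * betaD μ β g f₂ := by
    rw [hψ_def]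
    rw [integral_add (hint₁.const_mul lam) (hint₂.const_mul (1 - lam)),
      integral_const_mul, integral_const_mul]
    rfl
  calc betaD μ β g m = ∫ y, φ y ∂μ := rfl
    _ ≤ ∫ y, ψ y ∂μ := hmono
    _ = lam * betaD μ β g f₁ + (1 - lam) * betaD μ β g f₂ := hψ_integral
end

section
/- For probability densities f, h, g with essential suprema bounded by M < ∞ and 1 < β ≤ 2, the remainder term R(g‖f‖h) = (1/(β−1)) ∫ (g − f)(h^{β−1} − f^{β−1}) dμ satisfies R(g‖f‖h) ≤ 2 M^{β−1}/(β−1) · TVD(g, f). -/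
open MeasureTheory

/-- The total variation distance between densities `g` and `f` w.r.t. `μ`. -/
noncomputable def tvd {α : Type*} [MeasurableSpace α] (μ : Measure α)
    (g f : α → ℝ) : ℝ :=
  (1 / 2) * ∫ y, |g y - f y| ∂μ

/-- bound on the remainder term `R(g‖f‖h)` of the three-point property. -/
theorem remainder_tvd_bound {α : Type*} [MeasurableSpace α] (μ : Measure α)
    (g f h : α → ℝ) (β M : ℝ) (hβ1 : 1 < β) (hβ2 : β ≤ 2) (hM : 0 < M)
    (hg_meas : Measurable g) (hf_meas : Measurable f) (hh_meas : Measurable h)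
    (hg_nonneg : ∀ y, 0 ≤ g y) (hf_nonneg : ∀ y, 0 ≤ f y) (hh_nonneg : ∀ y, 0 ≤ h y)
    (hg_int : Integrable g μ) (hf_int : Integrable f μ) (hh_int : Integrable h μ)
    (hg_one : ∫ y, g y ∂μ = 1) (hf_one : ∫ y, f y ∂μ = 1) (hh_one : ∫ y, h y ∂μ = 1)
    (hg_bdd : ∀ᵐ y ∂μ, g y ≤ M) (hf_bdd : ∀ᵐ y ∂μ, f y ≤ M) (hh_bdd : ∀ᵐ y ∂μ, h y ≤ M) :
    (1 / (β - 1)) * ∫ y, (g y - f y) * (h y ^ (β - 1) - f y ^ (β - 1)) ∂μ ≤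
      2 * M ^ (β - 1) / (β - 1) * tvd μ g f := by
  have heβ : 0 < β - 1 := by linarith
  have he : (0:ℝ) ≤ β - 1 := le_of_lt heβ
  have hψ : ∀ᵐ y ∂μ, ‖h y ^ (β - 1) - f y ^ (β - 1)‖ ≤ M ^ (β - 1) := by
    filter_upwards [hh_bdd, hf_bdd] with y hhy hfy
    have h1 : h y ^ (β - 1) ≤ M ^ (β - 1) := Real.rpow_le_rpow (hh_nonneg y) hhy he
    have h2 : f y ^ (β - 1) ≤ M ^ (β - 1) := Real.rpow_le_rpow (hf_nonneg y) hfy he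
    have h3 : 0 ≤ h y ^ (β - 1) := Real.rpow_nonneg (hh_nonneg y) _
    have h4 : 0 ≤ f y ^ (β - 1) := Real.rpow_nonneg (hf_nonneg y) _
    rw [Real.norm_eq_abs, abs_sub_le_iff]
    constructor <;> linarith
  have hψmeas : AEStronglyMeasurable (fun y => h y ^ (β - 1) - f y ^ (β - 1)) μ :=
    ((hh_meas.pow measurable_const).sub (hf_meas.pow measurable_const)).aestronglyMeasurable
  have hgf := hg_int.sub hf_int
  have hint1 : Integrable (fun y => (h y ^ (β - 1) - f y ^ (β - 1)) * (g y - f y)) μ :=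
    hgf.bdd_mul hψmeas hψ
  have hint1' : Integrable (fun y => (g y - f y) * (h y ^ (β - 1) - f y ^ (β - 1))) μ := by
    simpa [mul_comm] using hint1
  have hint2 : Integrable (fun y => M ^ (β - 1) * |g y - f y|) μ := hgf.abs.const_mul _
  have hmono : ∫ y, (g y - f y) * (h y ^ (β - 1) - f y ^ (β - 1)) ∂μ ≤
      ∫ y, M ^ (β - 1) * |g y - f y| ∂μ := by
    refine integral_mono_ae hint1' hint2 ?_
    filter_upwards [hψ] with y hy
    calc (g y - f y) * (h y ^ (β - 1) - f y ^ (β - 1))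
        ≤ |(g y - f y) * (h y ^ (β - 1) - f y ^ (β - 1))| := le_abs_self _
      _ = |g y - f y| * |h y ^ (β - 1) - f y ^ (β - 1)| := abs_mul _ _
      _ ≤ |g y - f y| * M ^ (β - 1) := by
          exact mul_le_mul_of_nonneg_left (by simpa [Real.norm_eq_abs] using hy) (abs_nonneg _)
      _ = M ^ (β - 1) * |g y - f y| := mul_comm _ _
  rw [integral_const_mul] at hmono
  have hMe : 0 ≤ M ^ (β - 1) := Real.rpow_nonneg hM.le _
  unfold tvd
  have : (1 / (β - 1)) * ∫ y, (g y - f y) * (h y ^ (β - 1) - f y ^ (β - 1)) ∂μ ≤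
      (1 / (β - 1)) * (M ^ (β - 1) * ∫ y, |g y - f y| ∂μ) :=
    mul_le_mul_of_nonneg_left hmono (by positivity)
  calc _ ≤ (1 / (β - 1)) * (M ^ (β - 1) * ∫ y, |g y - f y| ∂μ) := this
    _ = 2 * M ^ (β - 1) / (β - 1) * ((1 / 2) * ∫ y, |g y - f y| ∂μ) := by ring
end

section
/- For probability densities g and f with essential suprema bounded by M < ∞ and 1 < β ≤ 2, the β-divergence is bounded by the total variation distance: D_B^{(β)}(g‖f) ≤ (M^{β−1}/(β−1)) · TVD(g, f). -/
open MeasureTheory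

lemma rpow_split (x β : ℝ) (hx : 0 ≤ x) (hβ : 1 < β) : x ^ β = x * x ^ (β - 1) := by
  have h := Real.rpow_add' hx (show (1:ℝ) + (β - 1) ≠ 0 by
    intro h; rw [show (1:ℝ)+(β-1) = β by ring] at h; linarith)
  rw [show (1:ℝ) + (β - 1) = β by ring, Real.rpow_one] at h
  exact h

lemma keyII (β M a b : ℝ) (hβ1 : 1 < β) (hM : 0 < M)
    (ha : 0 ≤ a) (hab : a ≤ b) (hbM : b ≤ M) :
    a ^ β + (β - 1) * b ^ β - β * (a * b ^ (β - 1)) ≤ (β - 1) * (M ^ (β - 1) * (b - a)) := by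
  have hb : 0 ≤ b := ha.trans hab
  have hsplitb : b ^ β = b * b ^ (β - 1) := rpow_split b β hb hβ1
  have h1 : a ^ (β - 1) ≤ b ^ (β - 1) := Real.rpow_le_rpow ha hab (by linarith)
  have h2 : b ^ (β - 1) ≤ M ^ (β - 1) := Real.rpow_le_rpow hb hbM (by linarith)
  have h3 : a ^ β ≤ a * b ^ (β - 1) := by
    rw [rpow_split a β ha hβ1]; exact mul_le_mul_of_nonneg_left h1 ha
  have h4 : (β - 1) * (b ^ (β-1) * (b - a)) ≤ (β - 1) * (M ^ (β-1) * (b - a)) := by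
    apply mul_le_mul_of_nonneg_left (mul_le_mul_of_nonneg_right h2 (by linarith)) (by linarith)
  nlinarith [hsplitb, h3, h4]

lemma keyI (β M a b : ℝ) (hβ1 : 1 < β) (hβ2 : β ≤ 2) (hM : 0 < M)
    (hb : 0 ≤ b) (hba : b ≤ a) (haM : a ≤ M) :
    a ^ β + (β - 1) * b ^ β - β * (a * b ^ (β - 1)) ≤ M ^ (β - 1) * (a - b) := by
  have ha : 0 ≤ a := hb.trans hba
  have hMsplit : M ^ β = M * M ^ (β - 1) := rpow_split M β hM.le hβ1
  rcases eq_or_lt_of_le (hba.trans haM) with hbM | hbM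
  · have hab : a = M := le_antisymm haM (hbM ▸ hba)
    rw [hab, hbM]
    have h5 : β * (M * M ^ (β - 1)) = β * M ^ β := by rw [hMsplit]
    linarith
  · have hbM' : b ≤ M := hbM.le
    set t : ℝ := (a - b) / (M - b) with ht_def
    have hMb : 0 < M - b := by linarith
    have ht0 : 0 ≤ t := div_nonneg (by linarith) hMb.le
    have ht1 : t ≤ 1 := (div_le_one hMb).mpr (by linarith)
    have ha_eq : a = b + t * (M - b) := by rw [ht_def, div_mul_cancel₀ _ hMb.ne']; ring
    have hsplitb : b ^ β = b * b ^ (β - 1) := rpow_split b β hb hβ1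
    have hbsplit2 : b = b ^ (β - 1) * b ^ (2 - β) := by
      rw [← Real.rpow_add' hb (by norm_num), show (β-1) + (2-β) = 1 by ring, Real.rpow_one]
    have hMsplit2 : M = M ^ (β - 1) * M ^ (2 - β) := by
      rw [← Real.rpow_add' hM.le (by norm_num), show (β-1) + (2-β) = 1 by ring, Real.rpow_one]
    have hconv := (convexOn_rpow hβ1.le).2 (Set.mem_Ici.mpr hb) (Set.mem_Ici.mpr hM.le)
      (by linarith : (0:ℝ) ≤ 1 - t) ht0 (by ring)
    try simp only [smul_eq_mul] at hconv
    have hconv' : a ^ β ≤ (1 - t) * b ^ β + t * M ^ β := by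
      rw [ha_eq, show b + t * (M - b) = (1 - t) * b + t * M by ring]; exact hconv
    have hb1 : (β - 1) * (b * b ^ (β - 1)) ≤ (β - 1) * (M * b ^ (β - 1)) := by
      apply mul_le_mul_of_nonneg_left (mul_le_mul_of_nonneg_right hbM' (by positivity)) (by linarith)
    have hexp : b ^ (2 - β) ≤ M ^ (2 - β) := Real.rpow_le_rpow hb hbM' (by linarith)
    have hb2 : M ^ (β - 1) * b ≤ M * b ^ (β - 1) := by
      calc M ^ (β-1) * b = M ^ (β-1) * (b ^ (β-1) * b ^ (2-β)) := by conv_lhs => rw [hbsplit2]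
        _ ≤ M ^ (β-1) * (b ^ (β-1) * M ^ (2-β)) := by
            apply mul_le_mul_of_nonneg_left (mul_le_mul_of_nonneg_left hexp (by positivity)) (by positivity)
        _ = M ^ (β-1) * M ^ (2-β) * b ^ (β-1) := by ring
        _ = M * b ^ (β-1) := by rw [← hMsplit2]
    have hKK : M ^ β - b ^ β - β * ((M - b) * b ^ (β - 1)) ≤ M ^ (β - 1) * (M - b) := by
      nlinarith [hb1, hb2, hsplitb, hMsplit]
    have e1 : ((1 - t) * b ^ β + t * M ^ β) + (β - 1) * b ^ β - β * (a * b ^ (β - 1))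
        = t * (M ^ β - b ^ β - β * ((M - b) * b ^ (β - 1))) := by
      rw [ha_eq, hsplitb]; ring
    have e2 : M ^ (β - 1) * (a - b) = t * (M ^ (β - 1) * (M - b)) := by
      rw [ha_eq]; ring
    have h6 := mul_le_mul_of_nonneg_left hKK ht0
    linarith [e1 ▸ h6]

lemma key (β M a b : ℝ) (hβ1 : 1 < β) (hβ2 : β ≤ 2) (hM : 0 < M)
    (ha : 0 ≤ a) (haM : a ≤ M) (hb : 0 ≤ b) (hbM : b ≤ M) :
    a ^ β / (β * (β - 1)) + b ^ β / β - a * b ^ (β - 1) / (β - 1) ≤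
      M ^ (β - 1) / (β - 1) * ((2 - β) / (2 * β) * (a - b) + 1 / 2 * |a - b|) := by
  have hβ0 : (0:ℝ) < β := by linarith
  have hβm : (0:ℝ) < β - 1 := by linarith
  have hprod : (0:ℝ) < β * (β - 1) := by positivity
  have e : a ^ β / (β * (β - 1)) + b ^ β / β - a * b ^ (β - 1) / (β - 1)
      = (a ^ β + (β - 1) * b ^ β - β * (a * b ^ (β - 1))) / (β * (β - 1)) := by
    field_simp
  rcases le_total b a with h | h
  · rw [abs_of_nonneg (by linarith), e]
    have e2 : M ^ (β-1) / (β-1) * ((2-β)/(2*β)*(a-b) + 1/2*(a-b))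
        = (M ^ (β-1) * (a-b)) / (β*(β-1)) := by field_simp; ring
    rw [e2]
    have hI := keyI β M a b hβ1 hβ2 hM hb h haM
    gcongr
  · rw [abs_of_nonpos (by linarith), e]
    have e2 : M ^ (β-1) / (β-1) * ((2-β)/(2*β)*(a-b) + 1/2*(-(a-b)))
        = ((β-1) * (M ^ (β-1) * (b-a))) / (β*(β-1)) := by field_simp; ring
    rw [e2]
    have hII := keyII β M a b hβ1 hM ha h hbM
    gcongr

/-- the β-divergence is bounded above by the TVD for bounded densities. -/
theorem betaD_le_tvd {α : Type*} [MeasurableSpace α] (μ : Measure α)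
    (g f : α → ℝ) (β M : ℝ) (hβ1 : 1 < β) (hβ2 : β ≤ 2) (hM : 0 < M)
    (hg_meas : Measurable g) (hf_meas : Measurable f)
    (hg_nonneg : ∀ y, 0 ≤ g y) (hf_nonneg : ∀ y, 0 ≤ f y)
    (hg_int : Integrable g μ) (hf_int : Integrable f μ)
    (hg_one : ∫ y, g y ∂μ = 1) (hf_one : ∫ y, f y ∂μ = 1)
    (hg_bdd : ∀ᵐ y ∂μ, g y ≤ M) (hf_bdd : ∀ᵐ y ∂μ, f y ≤ M) :
    betaD μ β g f ≤ M ^ (β - 1) / (β - 1) * tvd μ g f := by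
  have hβ0 : (0:ℝ) < β := by linarith
  have hβm : (0:ℝ) < β - 1 := by linarith
  have hgβ : Integrable (fun y => g y ^ β) μ := by
    refine (hg_int.const_mul (M ^ (β - 1))).mono'
      ((by fun_prop : Measurable fun y => g y ^ β).aestronglyMeasurable) ?_
    filter_upwards [hg_bdd] with y hy
    have h0 := hg_nonneg y
    rw [Real.norm_eq_abs, abs_of_nonneg (Real.rpow_nonneg h0 β)]
    calc g y ^ β = g y * g y ^ (β - 1) := rpow_split _ _ h0 hβ1
      _ ≤ g y * M ^ (β-1) := mul_le_mul_of_nonneg_left (Real.rpow_le_rpow h0 hy (by linarith)) h0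
      _ = M ^ (β-1) * g y := by ring
  have hfβ : Integrable (fun y => f y ^ β) μ := by
    refine (hf_int.const_mul (M ^ (β - 1))).mono'
      ((by fun_prop : Measurable fun y => f y ^ β).aestronglyMeasurable) ?_
    filter_upwards [hf_bdd] with y hy
    have h0 := hf_nonneg y
    rw [Real.norm_eq_abs, abs_of_nonneg (Real.rpow_nonneg h0 β)]
    calc f y ^ β = f y * f y ^ (β - 1) := rpow_split _ _ h0 hβ1
      _ ≤ f y * M ^ (β-1) := mul_le_mul_of_nonneg_left (Real.rpow_le_rpow h0 hy (by linarith)) h0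
      _ = M ^ (β-1) * f y := by ring
  have hgf : Integrable (fun y => g y * f y ^ (β - 1)) μ := by
    refine (hg_int.const_mul (M ^ (β - 1))).mono'
      ((by fun_prop : Measurable fun y => g y * f y ^ (β - 1)).aestronglyMeasurable) ?_
    filter_upwards [hf_bdd] with y hy
    have h0 := hg_nonneg y
    have h0f := hf_nonneg y
    rw [Real.norm_eq_abs, abs_of_nonneg (by positivity)]
    calc g y * f y ^ (β-1) ≤ g y * M ^ (β-1) :=
          mul_le_mul_of_nonneg_left (Real.rpow_le_rpow h0f hy (by linarith)) h0
      _ = M ^ (β-1) * g y := by ring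
  have hE_int : Integrable
      (fun y => g y ^ β / (β*(β-1)) + f y ^ β / β - g y * f y ^ (β-1)/(β-1)) μ :=
    ((hgβ.div_const _).add (hfβ.div_const _)).sub (hgf.div_const _)
  have hB_int : Integrable
      (fun y => M^(β-1)/(β-1) * ((2-β)/(2*β) * (g y - f y) + 1/2 * |g y - f y|)) μ :=
    (((hg_int.sub hf_int).const_mul _).add (((hg_int.sub hf_int).abs).const_mul _)).const_mul _
  have hae : (fun y => g y ^ β / (β*(β-1)) + f y ^ β / β - g y * f y ^ (β-1)/(β-1)) ≤ᵐ[μ]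
      (fun y => M^(β-1)/(β-1) * ((2-β)/(2*β) * (g y - f y) + 1/2 * |g y - f y|)) := by
    filter_upwards [hg_bdd, hf_bdd] with y h1 h2
    exact key β M (g y) (f y) hβ1 hβ2 hM (hg_nonneg y) h1 (hf_nonneg y) h2
  have hmono := integral_mono_ae hE_int hB_int hae
  unfold betaD
  refine le_trans hmono (le_of_eq ?_)
  have hsub : Integrable (fun y => g y - f y) μ := hg_int.sub hf_int
  have h1 : Integrable (fun y => (2-β)/(2*β) * (g y - f y)) μ := hsub.const_mul _
  have h2 : Integrable (fun y => 1/2 * |g y - f y|) μ := hsub.abs.const_mul _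
  rw [integral_const_mul, integral_add h1 h2,
    integral_const_mul, integral_const_mul, integral_sub hg_int hf_int, hg_one, hf_one]
  unfold tvd
  ring
end

section
/- For probability densities f, g₁, g₂ with essential suprema bounded by M < ∞ and 1 < β ≤ 2, |D_B^{(β)}(g₁‖f) − D_B^{(β)}(g₂‖f)| ≤ (M^{β−1}(β + 2))/(β(β−1)) · TVD(g₁, g₂). -/
open MeasureTheory

lemma rpow_sub_rpow_le {β x y M : ℝ} (hβ : 1 ≤ β) (hy : 0 ≤ y) (hxy : y ≤ x)
    (hxM : x ≤ M) : x ^ β - y ^ β ≤ β * M ^ (β - 1) * (x - y) := by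
  have hx : 0 ≤ x := hy.trans hxy
  rcases eq_or_lt_of_le hx with h0 | hxpos
  · have hx0 : x = 0 := h0.symm
    have hy0 : y = 0 := le_antisymm (hx0 ▸ hxy) hy
    simp [hx0, hy0, Real.zero_rpow (by linarith : β ≠ 0)]
  · have hM : 0 < M := hxpos.trans_le hxM
    have hs : -1 ≤ y / x - 1 := by
      have : 0 ≤ y / x := div_nonneg hy hx
      linarith
    have hb := one_add_mul_self_le_rpow_one_add hs hβ
    rw [add_sub_cancel] at hb
    -- hb : 1 + β * (y/x - 1) ≤ (y/x) ^ β
    have hxb : (0:ℝ) < x ^ β := Real.rpow_pos_of_pos hxpos β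
    have hdiv : (y / x) ^ β = y ^ β / x ^ β := Real.div_rpow hy hx β
    have h2 : x ^ β * (1 + β * (y / x - 1)) ≤ y ^ β := by
      calc x ^ β * (1 + β * (y / x - 1)) ≤ x ^ β * ((y/x) ^ β) := by
            exact mul_le_mul_of_nonneg_left hb hxb.le
        _ = y ^ β := by rw [hdiv]; field_simp
    have hx1 : x ^ β = x ^ (β - 1) * x := by
      rw [← Real.rpow_add_one hxpos.ne' (β - 1)]; ring_nf
    have hxy' : x ^ β * (β * (y/x - 1)) = β * x ^ (β-1) * (y - x) := by
      rw [hx1]; field_simp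
    have h3 : x ^ β - y ^ β ≤ β * x ^ (β - 1) * (x - y) := by nlinarith [h2, hxy']
    have h4 : x ^ (β - 1) ≤ M ^ (β - 1) :=
      Real.rpow_le_rpow hx hxM (by linarith)
    have hd : 0 ≤ x - y := by linarith
    nlinarith [mul_le_mul_of_nonneg_right (mul_le_mul_of_nonneg_left h4 (by linarith : (0:ℝ) ≤ β)) hd]

lemma key_pointwise {β x y c M : ℝ} (hβ : 1 < β) (hx : 0 ≤ x) (hy : 0 ≤ y)
    (hc : 0 ≤ c) (hxM : x ≤ M) (hyM : y ≤ M) (hcM : c ≤ M) :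
    |x ^ β - y ^ β - β * c ^ (β - 1) * (x - y)| ≤ β * M ^ (β - 1) * |x - y| := by
  have hβ0 : (0:ℝ) < β := by linarith
  have hcM' : c ^ (β - 1) ≤ M ^ (β - 1) := Real.rpow_le_rpow hc hcM (by linarith)
  have hc' : 0 ≤ c ^ (β - 1) := Real.rpow_nonneg hc _
  rcases le_total y x with h | h
  · have h1 : x ^ β - y ^ β ≤ β * M ^ (β - 1) * (x - y) := rpow_sub_rpow_le hβ.le hy h hxM
    have h2 : 0 ≤ x ^ β - y ^ β := by
      have := Real.rpow_le_rpow hy h hβ0.le; linarith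
    have h3 : β * c ^ (β - 1) * (x - y) ≤ β * M ^ (β - 1) * (x - y) := by
      apply mul_le_mul_of_nonneg_right _ (by linarith)
      exact mul_le_mul_of_nonneg_left hcM' hβ0.le
    have h4 : 0 ≤ β * c ^ (β - 1) * (x - y) := mul_nonneg (mul_nonneg hβ0.le hc') (by linarith)
    rw [abs_of_nonneg (by linarith : (0:ℝ) ≤ x - y)]
    rw [abs_le]; constructor <;> linarith
  · have h1 : y ^ β - x ^ β ≤ β * M ^ (β - 1) * (y - x) := rpow_sub_rpow_le hβ.le hx h hyM
    have h2 : 0 ≤ y ^ β - x ^ β := by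
      have := Real.rpow_le_rpow hx h hβ0.le; linarith
    have h3 : β * c ^ (β - 1) * (y - x) ≤ β * M ^ (β - 1) * (y - x) := by
      apply mul_le_mul_of_nonneg_right _ (by linarith)
      exact mul_le_mul_of_nonneg_left hcM' hβ0.le
    have h4 : 0 ≤ β * c ^ (β - 1) * (y - x) := mul_nonneg (mul_nonneg hβ0.le hc') (by linarith)
    rw [abs_of_nonpos (by linarith : x - y ≤ 0)]
    rw [abs_le]; constructor <;> linarith

lemma int_rpow {α : Type*} [MeasurableSpace α] {μ : Measure α} {g : α → ℝ} {β M : ℝ}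
    (hβ : 1 < β) (hM : 0 < M) (hg_meas : Measurable g) (hg_nonneg : ∀ y, 0 ≤ g y)
    (hg_int : Integrable g μ) (hg_bdd : ∀ᵐ y ∂μ, g y ≤ M) :
    Integrable (fun y => g y ^ β) μ := by
  apply Integrable.mono' (hg_int.const_mul (M ^ (β - 1)))
    ((hg_meas.pow measurable_const).aestronglyMeasurable)
  filter_upwards [hg_bdd] with y hy
  rw [Real.norm_eq_abs, abs_of_nonneg (Real.rpow_nonneg (hg_nonneg y) β)]
  rcases eq_or_lt_of_le (hg_nonneg y) with h0 | hpos
  · rw [← h0, Real.zero_rpow (by linarith : β ≠ 0)]; positivity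
  · have : g y ^ β = g y ^ (β - 1) * g y := by
      rw [← Real.rpow_add_one hpos.ne' (β - 1)]; ring_nf
    rw [this]
    exact mul_le_mul_of_nonneg_right (Real.rpow_le_rpow (hg_nonneg y) hy (by linarith))
      (hg_nonneg y)

lemma int_mul_rpow {α : Type*} [MeasurableSpace α] {μ : Measure α} {g f : α → ℝ} {β M : ℝ}
    (hβ : 1 < β) (hM : 0 < M) (hg_meas : Measurable g) (hf_meas : Measurable f)
    (hg_nonneg : ∀ y, 0 ≤ g y) (hf_nonneg : ∀ y, 0 ≤ f y)
    (hg_int : Integrable g μ) (hf_bdd : ∀ᵐ y ∂μ, f y ≤ M) :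
    Integrable (fun y => g y * f y ^ (β - 1)) μ := by
  apply Integrable.mono' (hg_int.const_mul (M ^ (β - 1)))
    ((hg_meas.mul (hf_meas.pow measurable_const)).aestronglyMeasurable)
  filter_upwards [hf_bdd] with y hy
  show ‖g y * f y ^ (β - 1)‖ ≤ M ^ (β - 1) * g y
  rw [Real.norm_eq_abs, abs_of_nonneg (mul_nonneg (hg_nonneg y) (Real.rpow_nonneg (hf_nonneg y) _))]
  have h1 : f y ^ (β - 1) ≤ M ^ (β - 1) :=
    Real.rpow_le_rpow (hf_nonneg y) hy (by linarith)
  calc g y * f y ^ (β - 1) ≤ g y * M ^ (β - 1) :=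
        mul_le_mul_of_nonneg_left h1 (hg_nonneg y)
    _ = M ^ (β - 1) * g y := mul_comm _ _


/-- triangle-type inequality for the β-divergence under a perturbation
of the data generating process. -/
theorem betaD_tvd_triangle_dgp {α : Type*} [MeasurableSpace α] (μ : Measure α)
    (g₁ g₂ f : α → ℝ) (β M : ℝ) (hβ1 : 1 < β) (hβ2 : β ≤ 2) (hM : 0 < M)
    (hg₁_meas : Measurable g₁) (hg₂_meas : Measurable g₂) (hf_meas : Measurable f)
    (hg₁_nonneg : ∀ y, 0 ≤ g₁ y) (hg₂_nonneg : ∀ y, 0 ≤ g₂ y) (hf_nonneg : ∀ y, 0 ≤ f y)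
    (hg₁_int : Integrable g₁ μ) (hg₂_int : Integrable g₂ μ) (hf_int : Integrable f μ)
    (hg₁_one : ∫ y, g₁ y ∂μ = 1) (hg₂_one : ∫ y, g₂ y ∂μ = 1) (hf_one : ∫ y, f y ∂μ = 1)
    (hg₁_bdd : ∀ᵐ y ∂μ, g₁ y ≤ M) (hg₂_bdd : ∀ᵐ y ∂μ, g₂ y ≤ M) (hf_bdd : ∀ᵐ y ∂μ, f y ≤ M) :
    |betaD μ β g₁ f - betaD μ β g₂ f| ≤
      M ^ (β - 1) * (β + 2) / (β * (β - 1)) * tvd μ g₁ g₂ := by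
  have hβ0 : (0:ℝ) < β := by linarith
  have hβ1' : (0:ℝ) < β - 1 := by linarith
  have hA : (0:ℝ) < M ^ (β - 1) := Real.rpow_pos_of_pos hM _
  have hI1 : Integrable (fun y => g₁ y ^ β) μ :=
    int_rpow hβ1 hM hg₁_meas hg₁_nonneg hg₁_int hg₁_bdd
  have hI2 : Integrable (fun y => g₂ y ^ β) μ :=
    int_rpow hβ1 hM hg₂_meas hg₂_nonneg hg₂_int hg₂_bdd
  have hIf : Integrable (fun y => f y ^ β) μ :=
    int_rpow hβ1 hM hf_meas hf_nonneg hf_int hf_bdd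
  have hJ1 : Integrable (fun y => g₁ y * f y ^ (β - 1)) μ :=
    int_mul_rpow hβ1 hM hg₁_meas hf_meas hg₁_nonneg hf_nonneg hg₁_int hf_bdd
  have hJ2 : Integrable (fun y => g₂ y * f y ^ (β - 1)) μ :=
    int_mul_rpow hβ1 hM hg₂_meas hf_meas hg₂_nonneg hf_nonneg hg₂_int hf_bdd
  have hint1 : Integrable
      (fun y => g₁ y ^ β / (β * (β - 1)) + f y ^ β / β - g₁ y * f y ^ (β - 1) / (β - 1)) μ :=
    ((hI1.div_const _).add (hIf.div_const _)).sub (hJ1.div_const _)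
  have hint2 : Integrable
      (fun y => g₂ y ^ β / (β * (β - 1)) + f y ^ β / β - g₂ y * f y ^ (β - 1) / (β - 1)) μ :=
    ((hI2.div_const _).add (hIf.div_const _)).sub (hJ2.div_const _)
  have hdiff : betaD μ β g₁ f - betaD μ β g₂ f =
      ∫ y, ((g₁ y ^ β / (β * (β - 1)) + f y ^ β / β - g₁ y * f y ^ (β - 1) / (β - 1)) -
        (g₂ y ^ β / (β * (β - 1)) + f y ^ β / β - g₂ y * f y ^ (β - 1) / (β - 1))) ∂μ := by
    unfold betaD
    rw [integral_sub hint1 hint2]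
  have hDint : Integrable (fun y => M ^ (β - 1) / (β - 1) * |g₁ y - g₂ y|) μ :=
    ((hg₁_int.sub hg₂_int).abs).const_mul _
  have hptwise : ∀ᵐ y ∂μ,
      |(g₁ y ^ β / (β * (β - 1)) + f y ^ β / β - g₁ y * f y ^ (β - 1) / (β - 1)) -
        (g₂ y ^ β / (β * (β - 1)) + f y ^ β / β - g₂ y * f y ^ (β - 1) / (β - 1))| ≤
        M ^ (β - 1) / (β - 1) * |g₁ y - g₂ y| := by
    filter_upwards [hg₁_bdd, hg₂_bdd, hf_bdd] with y h1 h2 h3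
    have key := key_pointwise hβ1 (hg₁_nonneg y) (hg₂_nonneg y) (hf_nonneg y) h1 h2 h3
    have heq : (g₁ y ^ β / (β * (β - 1)) + f y ^ β / β - g₁ y * f y ^ (β - 1) / (β - 1)) -
        (g₂ y ^ β / (β * (β - 1)) + f y ^ β / β - g₂ y * f y ^ (β - 1) / (β - 1)) =
        (g₁ y ^ β - g₂ y ^ β - β * f y ^ (β - 1) * (g₁ y - g₂ y)) / (β * (β - 1)) := by
      field_simp
      ring
    rw [heq, abs_div, abs_of_pos (by positivity : (0:ℝ) < β * (β - 1)),
      div_le_iff₀ (by positivity : (0:ℝ) < β * (β - 1))]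
    calc |g₁ y ^ β - g₂ y ^ β - β * f y ^ (β - 1) * (g₁ y - g₂ y)|
        ≤ β * M ^ (β - 1) * |g₁ y - g₂ y| := key
      _ = M ^ (β - 1) / (β - 1) * |g₁ y - g₂ y| * (β * (β - 1)) := by
          field_simp
  have hstep1 : |betaD μ β g₁ f - betaD μ β g₂ f| ≤
      ∫ y, M ^ (β - 1) / (β - 1) * |g₁ y - g₂ y| ∂μ := by
    rw [hdiff]
    have h := norm_integral_le_integral_norm (μ := μ)
      (f := fun y => (g₁ y ^ β / (β * (β - 1)) + f y ^ β / β - g₁ y * f y ^ (β - 1) / (β - 1)) -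
        (g₂ y ^ β / (β * (β - 1)) + f y ^ β / β - g₂ y * f y ^ (β - 1) / (β - 1)))
    simp only [Real.norm_eq_abs] at h
    exact h.trans (integral_mono_of_nonneg (Filter.Eventually.of_forall fun y => abs_nonneg _)
      hDint hptwise)
  have hK : (0:ℝ) ≤ ∫ y, |g₁ y - g₂ y| ∂μ :=
    integral_nonneg fun y => abs_nonneg _
  rw [integral_const_mul] at hstep1
  have hcoef : M ^ (β - 1) / (β - 1) ≤ M ^ (β - 1) * (β + 2) / (β * (β - 1)) * (1 / 2) := by
    rw [mul_one_div, div_div, div_le_div_iff₀ hβ1' (by positivity)]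
    nlinarith [mul_nonneg (mul_nonneg hA.le hβ1'.le) (by linarith : (0:ℝ) ≤ 2 - β)]
  calc |betaD μ β g₁ f - betaD μ β g₂ f|
      ≤ M ^ (β - 1) / (β - 1) * ∫ y, |g₁ y - g₂ y| ∂μ := hstep1
    _ ≤ M ^ (β - 1) * (β + 2) / (β * (β - 1)) * (1 / 2) * ∫ y, |g₁ y - g₂ y| ∂μ :=
        mul_le_mul_of_nonneg_right hcoef hK
    _ = M ^ (β - 1) * (β + 2) / (β * (β - 1)) * tvd μ g₁ g₂ := by
        unfold tvd
        ring
end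

section
/- The β-divergence recovers the KL divergence in the limit: for probability densities g and f with ∫ g^β dμ, ∫ f^β dμ, ∫ g f^{β−1} dμ finite for β in a neighborhood of 1 and suitable dominated convergence assumptions, lim_{β→1} D_B^{(β)}(g‖f) = KLD(g‖f). -/
open MeasureTheory

noncomputable def Fkl (u v β : ℝ) : ℝ := u ^ β / β - u * v ^ (β - 1) + (β - 1) * (v ^ β / β)

noncomputable def Dkl (u v β : ℝ) : ℝ :=
  (u ^ β * Real.log u * β - u ^ β * 1) / β ^ 2 - u * (v ^ (β - 1) * Real.log v * 1)
    + (1 * (v ^ β / β) + (β - 1) * ((v ^ β * Real.log v * β - v ^ β * 1) / β ^ 2))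

lemma hasDerivAt_Fkl {u v : ℝ} (hu : 0 < u) (hv : 0 < v) {β : ℝ} (hβ : β ≠ 0) :
    HasDerivAt (Fkl u v) (Dkl u v β) β := by
  have hid : HasDerivAt (fun x : ℝ => x) 1 β := hasDerivAt_id β
  have h1 : HasDerivAt (fun x : ℝ => u ^ x) (u ^ β * Real.log u) β :=
    (Real.hasStrictDerivAt_const_rpow hu β).hasDerivAt
  have hdiv : HasDerivAt (fun x : ℝ => u ^ x / x)
      ((u ^ β * Real.log u * β - u ^ β * 1) / β ^ 2) β := h1.div hid hβ
  have hsub : HasDerivAt (fun x : ℝ => x - 1) 1 β := hid.sub_const 1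
  have h2 : HasDerivAt (fun x : ℝ => v ^ (x - 1)) (v ^ (β - 1) * Real.log v * 1) β := by
    have := HasDerivAt.comp β
      ((Real.hasStrictDerivAt_const_rpow hv (β - 1)).hasDerivAt) hsub
    simpa [Function.comp_def] using this
  have h3 : HasDerivAt (fun x : ℝ => v ^ x / x)
      ((v ^ β * Real.log v * β - v ^ β * 1) / β ^ 2) β :=
    ((Real.hasStrictDerivAt_const_rpow hv β).hasDerivAt).div hid hβ
  exact (hdiv.sub (h2.const_mul u)).add (hsub.mul h3)

lemma Dkl_bound (M u v t : ℝ) (hu : 0 < u) (hv : 0 < v)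
    (hlu : |Real.log u| ≤ M) (hlv : |Real.log v| ≤ M)
    (ht : t ∈ Set.Icc (1/2 : ℝ) (3/2)) :
    |Dkl u v t| ≤ 20 * (Real.exp (2*M) + 1)^2 * (M+1) := by
  obtain ⟨ht1, ht2⟩ := ht
  set E := Real.exp (2*M) with hE
  clear_value E
  have hM : 0 ≤ M := le_trans (abs_nonneg _) hlu
  have hE1 : 1 ≤ E := hE ▸ Real.one_le_exp (by positivity)
  have hE0 : 0 ≤ E := by linarith
  have hpow : ∀ w s : ℝ, 0 < w → |Real.log w| ≤ M → |s| ≤ 2 → w ^ s ≤ E := by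
    intro w s hw hl hs
    rw [Real.rpow_def_of_pos hw, hE]
    apply Real.exp_le_exp.2
    calc Real.log w * s ≤ |Real.log w * s| := le_abs_self _
      _ = |Real.log w| * |s| := abs_mul _ _
      _ ≤ M * 2 := mul_le_mul hl hs (abs_nonneg _) hM
      _ = 2 * M := by ring
  have habs_t : |t| ≤ 2 := by rw [abs_le]; constructor <;> linarith
  have habs_t1 : |t - 1| ≤ 2 := by rw [abs_le]; constructor <;> linarith
  have hden : (1:ℝ)/4 ≤ |t^2| := by
    rw [abs_of_nonneg (sq_nonneg t)]; nlinarith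
  have key : ∀ w : ℝ, 0 < w → |Real.log w| ≤ M →
      |(w ^ t * Real.log w * t - w ^ t * 1) / t ^ 2| ≤ 4 * (E * (2*M+1)) := by
    intro w hw hl
    have hwt : w ^ t ≤ E := hpow w t hw hl habs_t
    have hwt0 : (0:ℝ) ≤ w ^ t := (Real.rpow_pos_of_pos hw t).le
    rw [abs_div]
    have hnum : |w ^ t * Real.log w * t - w ^ t * 1| ≤ E * (2*M+1) := by
      have h1 : |w ^ t * Real.log w * t| ≤ E * M * 2 := by
        rw [abs_mul, abs_mul, abs_of_nonneg hwt0]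
        have : |Real.log w| * |t| ≤ M * 2 :=
          mul_le_mul hl habs_t (abs_nonneg _) hM
        nlinarith [abs_nonneg (Real.log w), abs_nonneg t]
      have h2 : |w ^ t * 1| ≤ E := by rw [mul_one, abs_of_nonneg hwt0]; exact hwt
      calc |w ^ t * Real.log w * t - w ^ t * 1|
          ≤ |w ^ t * Real.log w * t| + |w ^ t * 1| := abs_sub _ _
        _ ≤ E * M * 2 + E := add_le_add h1 h2
        _ = E * (2*M+1) := by ring
    calc |w ^ t * Real.log w * t - w ^ t * 1| / |t ^ 2|
        ≤ (E * (2*M+1)) / (1/4 : ℝ) := by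
          apply div_le_div₀ (by positivity) hnum (by norm_num) hden
      _ = 4 * (E * (2*M+1)) := by ring
  have huE : u ≤ E := by
    have := hpow u 1 hu hlu (by norm_num)
    simpa using this
  have hT2 : |u * (v ^ (t-1) * Real.log v * 1)| ≤ E * (E * M) := by
    rw [mul_one, abs_mul, abs_mul, abs_of_nonneg hu.le,
      abs_of_nonneg (Real.rpow_pos_of_pos hv _).le]
    have hvt : v ^ (t-1) ≤ E := hpow v (t-1) hv hlv habs_t1
    have hvt0 : (0:ℝ) ≤ v ^ (t-1) := (Real.rpow_pos_of_pos hv _).le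
    have h1 : v ^ (t-1) * |Real.log v| ≤ E * M := mul_le_mul hvt hlv (abs_nonneg _) hE0
    exact mul_le_mul huE h1 (by positivity) hE0
  have hT3a : |1 * (v ^ t / t)| ≤ 2 * E := by
    rw [one_mul, abs_div, abs_of_pos (by linarith : (0:ℝ) < t),
      abs_of_nonneg (Real.rpow_pos_of_pos hv t).le]
    have hvt : v ^ t ≤ E := hpow v t hv hlv habs_t
    rw [div_le_iff₀ (by linarith : (0:ℝ) < t)]
    nlinarith
  have hT3b : |(t-1) * ((v ^ t * Real.log v * t - v ^ t * 1) / t ^ 2)| ≤ 2 * (4 * (E * (2*M+1))) := by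
    rw [abs_mul]
    have := key v hv hlv
    have h0 : (0:ℝ) ≤ |(v ^ t * Real.log v * t - v ^ t * 1) / t ^ 2| := abs_nonneg _
    nlinarith
  have hT1 := key u hu hlu
  calc |Dkl u v t|
      ≤ |(u ^ t * Real.log u * t - u ^ t * 1) / t ^ 2 - u * (v ^ (t-1) * Real.log v * 1)|
        + |1 * (v ^ t / t) + (t-1) * ((v ^ t * Real.log v * t - v ^ t * 1) / t ^ 2)| := abs_add_le _ _
    _ ≤ (|(u ^ t * Real.log u * t - u ^ t * 1) / t ^ 2| + |u * (v ^ (t-1) * Real.log v * 1)|)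
        + (|1 * (v ^ t / t)| + |(t-1) * ((v ^ t * Real.log v * t - v ^ t * 1) / t ^ 2)|) :=
        add_le_add (abs_sub _ _) (abs_add_le _ _)
    _ ≤ (4 * (E * (2*M+1)) + E * (E * M)) + (2 * E + 2 * (4 * (E * (2*M+1)))) :=
        add_le_add (add_le_add hT1 hT2) (add_le_add hT3a hT3b)
    _ ≤ 20 * (E + 1)^2 * (M+1) := by
        clear key hpow hT1 hT2 hT3a hT3b hden habs_t habs_t1 hlu hlv huE hE ht1 ht2 hu hv
        nlinarith [mul_nonneg hE0 hM, mul_nonneg (mul_nonneg hE0 hE0) hM, mul_nonneg hE0 hE0,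
          sq_nonneg (E+1), sq_nonneg E]

lemma Fkl_one (u v : ℝ) : Fkl u v 1 = 0 := by
  simp [Fkl, Real.rpow_one]

lemma Fkl_bound (M u v : ℝ) (hu : 0 < u) (hv : 0 < v)
    (hlu : |Real.log u| ≤ M) (hlv : |Real.log v| ≤ M)
    {β : ℝ} (hβ : β ∈ Set.Icc (1/2 : ℝ) (3/2)) :
    |Fkl u v β| ≤ 20 * (Real.exp (2*M) + 1)^2 * (M+1) * |β - 1| := by
  have h1 : (1:ℝ) ∈ Set.Icc (1/2 : ℝ) (3/2) := by norm_num
  have hmvt := Convex.norm_image_sub_le_of_norm_hasDerivWithin_le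
    (f := Fkl u v) (f' := Dkl u v) (s := Set.Icc (1/2 : ℝ) (3/2))
    (fun x hx => (hasDerivAt_Fkl hu hv (by intro h; rw [h] at hx; norm_num at hx
      : x ≠ 0)).hasDerivWithinAt)
    (fun x hx => by simpa [Real.norm_eq_abs] using Dkl_bound M u v x hu hv hlu hlv hx)
    (convex_Icc _ _) h1 hβ
  simpa [Fkl_one, Real.norm_eq_abs] using hmvt

lemma Dkl_one (u v : ℝ) (hu : 0 < u) (hv : 0 < v) :
    Dkl u v 1 = u * Real.log u - u * Real.log v - u + v := by
  simp [Dkl, Real.rpow_one, Real.rpow_zero]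
  ring

lemma integrand_eq (u v β : ℝ) (hβ0 : β ≠ 0) (hβ1 : β ≠ 1) :
    u ^ β / (β * (β - 1)) + v ^ β / β - u * v ^ (β - 1) / (β - 1) = Fkl u v β / (β - 1) := by
  have hβ1' : β - 1 ≠ 0 := sub_ne_zero.2 hβ1
  field_simp [Fkl]
  unfold Fkl
  field_simp
  ring

/-- the β-divergence recovers the KL divergence as `β → 1`, for bounded
densities bounded away from zero on a finite-measure space. -/
theorem betaD_tendsto_kld {α : Type*} [MeasurableSpace α] (μ : Measure α)
    [IsFiniteMeasure μ] (g f : α → ℝ) (a b : ℝ) (ha : 0 < a) (hab : a ≤ b)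
    (hg_meas : Measurable g) (hf_meas : Measurable f)
    (hg_bdd : ∀ᵐ y ∂μ, a ≤ g y ∧ g y ≤ b)
    (hf_bdd : ∀ᵐ y ∂μ, a ≤ f y ∧ f y ≤ b)
    (hg_one : ∫ y, g y ∂μ = 1) (hf_one : ∫ y, f y ∂μ = 1) :
    Filter.Tendsto (fun β => betaD μ β g f) (nhdsWithin 1 {(1 : ℝ)}ᶜ)
      (nhds (∫ y, g y * Real.log (g y / f y) ∂μ)) := by
  set M : ℝ := max |Real.log a| |Real.log b| with hM
  set C : ℝ := 20 * (Real.exp (2*M) + 1)^2 * (M+1) with hC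
  have hb : 0 < b := lt_of_lt_of_le ha hab
  -- log bounds
  have hlog : ∀ u : ℝ, a ≤ u → u ≤ b → |Real.log u| ≤ M := by
    intro u h1 h2
    have hu : 0 < u := lt_of_lt_of_le ha h1
    rw [abs_le]
    constructor
    · have : Real.log a ≤ Real.log u := Real.log_le_log (by positivity) h1
      have h3 : -|Real.log a| ≤ Real.log a := neg_abs_le _
      have h4 : |Real.log a| ≤ M := le_max_left _ _
      linarith
    · have : Real.log u ≤ Real.log b := Real.log_le_log hu h2
      have h3 : Real.log b ≤ |Real.log b| := le_abs_self _
      have h4 : |Real.log b| ≤ M := le_max_right _ _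
      linarith
  -- eventual facts about β
  have hev1 : ∀ᶠ β in nhdsWithin 1 {(1:ℝ)}ᶜ, β ∈ Set.Icc (1/2 : ℝ) (3/2) :=
    mem_nhdsWithin_of_mem_nhds (Icc_mem_nhds (by norm_num) (by norm_num))
  have hev2 : ∀ᶠ β in nhdsWithin 1 {(1:ℝ)}ᶜ, β ≠ 1 := by
    filter_upwards [self_mem_nhdsWithin] with β hβ
    simpa using hβ
  -- integrability helpers
  have hInt_g : Integrable g μ := by
    refine Integrable.mono' (integrable_const b) hg_meas.aestronglyMeasurable ?_
    filter_upwards [hg_bdd] with y hy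
    rw [Real.norm_eq_abs, abs_of_nonneg (le_trans ha.le hy.1)]; exact hy.2
  have hInt_f : Integrable f μ := by
    refine Integrable.mono' (integrable_const b) hf_meas.aestronglyMeasurable ?_
    filter_upwards [hf_bdd] with y hy
    rw [Real.norm_eq_abs, abs_of_nonneg (le_trans ha.le hy.1)]; exact hy.2
  have hInt_log : Integrable (fun y => g y * Real.log (g y / f y)) μ := by
    refine Integrable.mono' (integrable_const (b * (2 * M)))
      (hg_meas.mul ((hg_meas.div hf_meas).log)).aestronglyMeasurable ?_
    filter_upwards [hg_bdd, hf_bdd] with y hgy hfy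
    have hgy0 : 0 < g y := lt_of_lt_of_le ha hgy.1
    have hfy0 : 0 < f y := lt_of_lt_of_le ha hfy.1
    rw [Real.norm_eq_abs, abs_mul, abs_of_pos hgy0,
      Real.log_div hgy0.ne' hfy0.ne']
    have h1 : |Real.log (g y) - Real.log (f y)| ≤ 2 * M := by
      have := hlog (g y) hgy.1 hgy.2
      have := hlog (f y) hfy.1 hfy.2
      calc |Real.log (g y) - Real.log (f y)| ≤ |Real.log (g y)| + |Real.log (f y)| := abs_sub _ _
        _ ≤ 2 * M := by linarith
    exact mul_le_mul hgy.2 h1 (abs_nonneg _) hb.le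
  -- Step A: dominated convergence
  have hA : Filter.Tendsto (fun β => betaD μ β g f) (nhdsWithin 1 {(1 : ℝ)}ᶜ)
      (nhds (∫ y, (g y * Real.log (g y / f y) - g y + f y) ∂μ)) := by
    simp only [betaD]
    refine tendsto_integral_filter_of_dominated_convergence (fun _ => C) ?_ ?_
      (integrable_const C) ?_
    · filter_upwards with β
      apply Measurable.aestronglyMeasurable
      fun_prop
    · filter_upwards [hev1, hev2] with β hβIcc hβ1
      filter_upwards [hg_bdd, hf_bdd] with y hgy hfy
      have hgy0 : 0 < g y := lt_of_lt_of_le ha hgy.1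
      have hfy0 : 0 < f y := lt_of_lt_of_le ha hfy.1
      have hβ0 : β ≠ 0 := by intro h; rw [h] at hβIcc; norm_num at hβIcc
      rw [Real.norm_eq_abs, integrand_eq _ _ _ hβ0 hβ1, abs_div]
      have hF := Fkl_bound M (g y) (f y) hgy0 hfy0
        (hlog _ hgy.1 hgy.2) (hlog _ hfy.1 hfy.2) hβIcc
      have hne : (0:ℝ) < |β - 1| := abs_pos.2 (sub_ne_zero.2 hβ1)
      rw [div_le_iff₀ hne]
      exact hF
    · filter_upwards [hg_bdd, hf_bdd] with y hgy hfy
      have hgy0 : 0 < g y := lt_of_lt_of_le ha hgy.1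
      have hfy0 : 0 < f y := lt_of_lt_of_le ha hfy.1
      have hd : HasDerivAt (Fkl (g y) (f y)) (Dkl (g y) (f y) 1) 1 :=
        hasDerivAt_Fkl hgy0 hfy0 one_ne_zero
      have hslope := hasDerivAt_iff_tendsto_slope.mp hd
      have hLy : Dkl (g y) (f y) 1 = g y * Real.log (g y / f y) - g y + f y := by
        rw [Dkl_one _ _ hgy0 hfy0, Real.log_div hgy0.ne' hfy0.ne']
        ring
      rw [hLy] at hslope
      refine hslope.congr' ?_
      filter_upwards [hev1, hev2] with β hβIcc hβ1
      have hβ0 : β ≠ 0 := by intro h; rw [h] at hβIcc; norm_num at hβIcc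
      rw [slope_def_field, Fkl_one, integrand_eq _ _ _ hβ0 hβ1]
      simp [div_eq_div_iff]
  -- Step B: identify the limit
  have hB : ∫ y, (g y * Real.log (g y / f y) - g y + f y) ∂μ
      = ∫ y, g y * Real.log (g y / f y) ∂μ := by
    have h1 := integral_add (hInt_log.sub hInt_g) hInt_f
    have h2 := integral_sub hInt_log hInt_g
    simp only [Pi.sub_apply] at h1
    rw [h1, h2, hg_one, hf_one]
    ring
  rw [hB] at hA
  exact hA
end
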